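/- With the notation of the construction over 3 = {0,1,2} (T, ↩, E, and e(α) := lim_n (α↾n)^↩ as defined), the set e^{-1}({10^ω}) = { α ∈ T ∩ 3^ω : e(α) = 1000⋯ } is homeomorphic to the Baire space ℕ^ℕ; consequently e^{-1}({10^ω}) is not a countable union of compact subsets of 3^ω. -/

import Mathlib

/-!
Read a word of `T` letter by letter. The erased word contains as many `1`s as the excess of `1`s
over `2`s read so far, and a `2` erases its last `1`; so a `1` of the erased word survives for ever
exactly when the excess never again drops below its rank among the `1`s. Hence `e(α) = 10^ω`
forces `α 0 = 1`, an excess `≥ 1` after the first letter, and infinitely many returns of the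
excess to `1`. Cutting `α` at these return times writes it as `1⌢γ₀⌢γ₁⌢⋯` with blocks
`γᵢ ∈ {0} ∪ E`, and conversely every such word erases to `10^ω`. Blocks form a prefix code, so
this parse is unique and `γₙ` depends only on a finite prefix of `α`: the parse is a homeomorphism
onto `({0} ∪ E)^ℕ`, a countable power of a countably infinite discrete space, i.e. onto `ℕ^ℕ`.
Finally `ℕ^ℕ` is not σ-compact: the `n`-th coordinates of the `n`-th compact set are bounded by
some `bₙ`, and `n ↦ bₙ + 1` lies in none of them.
-/

open Set Classical

/-- The prefix of length `l` of an infinite word. -/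
def wordPrefix {α : Type*} (x : ℕ → α) (l : ℕ) : List α := List.ofFn fun i : Fin l => x i.val

/-- `T ∩ 3^{<ω}`: finite words over `3 = {0,1,2}` all of whose prefixes contain at most as
many `2`s as `1`s. -/
def Tfin : Set (List (Fin 3)) :=
  { s | ∀ l : ℕ, (s.take l).count 2 ≤ (s.take l).count 1 }

/-- `T ∩ 3^ω`: infinite words over `3 = {0,1,2}` all of whose finite prefixes contain at
most as many `2`s as `1`s. -/
def Tinf : Set (ℕ → Fin 3) :=
  { α | ∀ l : ℕ, (wordPrefix α l).count 2 ≤ (wordPrefix α l).count 1 }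

/-- Replace the first occurrence of `1` (i.e. `true`) in a binary word by `0`. -/
def replaceFirstOne : List Bool → List Bool
  | [] => []
  | true :: t => false :: t
  | false :: t => false :: replaceFirstOne t

/-- Replace the last occurrence of `1` (i.e. `true`) in a binary word by `0`. -/
def replaceLastOne (l : List Bool) : List Bool := (replaceFirstOne l.reverse).reverse

/-- One step of the erasing operation: appending a letter `ε ∈ {0,1}` appends it to the
erased word, while appending the letter `2` replaces the last `1` of the erased word by `0`. -/
def eraseStep (acc : List Bool) (a : Fin 3) : List Bool :=
  if a = 2 then replaceLastOne acc else acc ++ [decide (a = 1)]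

/-- The erasing operation `s ↦ s^↩` on finite words over `3 = {0,1,2}` (letters `0`,`1` of
the binary output are encoded as `false`,`true`): `∅^↩ = ∅`, `(tε)^↩ = t^↩ε` for `ε ∈ {0,1}`,
and `(t2)^↩ = t^↩` with its last `1` replaced by `0`. -/
def eraseWord (s : List (Fin 3)) : List Bool := s.foldl eraseStep []

/-- `t` is a (finite) prefix of the infinite word `x`. -/
def InfPrefix {α : Type*} (t : List α) (x : ℕ → α) : Prop :=
  ∀ i : Fin t.length, t.get i = x i.val

/-- The infinite word `x` is the limit of the sequence of finite words `s`: a finite word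
is a prefix of `x` iff it is a prefix of `s m` for all sufficiently large `m`. -/
def IsLimitOf (x : ℕ → Bool) (s : ℕ → List Bool) : Prop :=
  ∀ t : List Bool, InfPrefix t x ↔ ∀ᶠ m in Filter.atTop, t <+: s m

/-- The erasure `e(α) := lim_n (α↾n)^↩` of an infinite word over `3 = {0,1,2}` (an arbitrary
value is returned if the limit does not exist; for `α ∈ T ∩ 3^ω` it always exists). -/
noncomputable def eMap (α : ℕ → Fin 3) : ℕ → Bool :=
  if h : ∃ x : ℕ → Bool, IsLimitOf x (fun m => eraseWord (wordPrefix α m)) then h.choose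
  else fun _ => false

/-- The infinite binary word `10^ω = 1000⋯`. -/
noncomputable def oneZeros : ℕ → Bool := fun n => decide (n = 0)

/-- The set `e^{-1}({10^ω}) = { α ∈ T ∩ 3^ω : e(α) = 1000⋯ }`. -/
noncomputable def preimTenZeros : Set (ℕ → Fin 3) :=
  { α | α ∈ Tinf ∧ eMap α = oneZeros }

lemma Fin.eq_zero_or_eq_one_or_eq_two (a : Fin 3) : a = 0 ∨ a = 1 ∨ a = 2 := by
  revert a; decide

lemma count_one_add_count_two_le (s : List (Fin 3)) : s.count 1 + s.count 2 ≤ s.length := by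
  induction s with
  | nil => rfl
  | cons a s ih => rcases Fin.eq_zero_or_eq_one_or_eq_two a with rfl | rfl | rfl <;> grind

lemma exists_take_count_eq {β : Type*} [DecidableEq β] (a : β) (l : List β) {c : ℕ}
    (hc : c ≤ l.count a) : ∃ n, (l.take n).count a = c := by
  induction l generalizing c with
  | nil => exact ⟨0, by simp_all⟩
  | cons b l ih =>
    rcases Nat.eq_zero_or_pos c with rfl | hc0
    · exact ⟨0, by simp⟩
    by_cases hb : b = a
    · subst hb
      obtain ⟨n, hn⟩ := ih (c := c - 1) (by grind)
      exact ⟨n + 1, by grind⟩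
    · obtain ⟨n, hn⟩ := ih (c := c) (by simpa [List.count_cons, hb] using hc)
      exact ⟨n + 1, by simp [hb, hn]⟩

lemma length_replaceFirstOne (l : List Bool) : (replaceFirstOne l).length = l.length := by
  induction l with
  | nil => rfl
  | cons a t ih => cases a <;> simp [replaceFirstOne, ih]

lemma length_replaceLastOne (l : List Bool) : (replaceLastOne l).length = l.length := by
  simp [replaceLastOne, length_replaceFirstOne]

lemma replaceFirstOne_append_of_mem {l : List Bool} (h : true ∈ l) (m : List Bool) :
    replaceFirstOne (l ++ m) = replaceFirstOne l ++ m := by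
  induction l with
  | nil => simp at h
  | cons a t ih =>
    cases a
    · simp_all [replaceFirstOne]
    · simp [replaceFirstOne]

lemma replaceLastOne_append_of_mem (l : List Bool) {m : List Bool} (h : true ∈ m) :
    replaceLastOne (l ++ m) = l ++ replaceLastOne m := by
  simp [replaceLastOne, replaceFirstOne_append_of_mem (List.mem_reverse.2 h)]

lemma count_replaceFirstOne {l : List Bool} (h : true ∈ l) :
    (replaceFirstOne l).count true + 1 = l.count true := by
  induction l with
  | nil => simp at h
  | cons a t ih =>
    cases a
    · simp_all [replaceFirstOne]
    · simp [replaceFirstOne]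

lemma count_replaceLastOne {l : List Bool} (h : true ∈ l) :
    (replaceLastOne l).count true + 1 = l.count true := by
  simpa [replaceLastOne] using count_replaceFirstOne (List.mem_reverse.2 h)

lemma take_mem_Tfin {s : List (Fin 3)} (hs : s ∈ Tfin) (n : ℕ) : s.take n ∈ Tfin := by
  intro l
  rw [List.take_take]
  exact hs _

lemma append_mem_Tfin {s u : List (Fin 3)} (hs : s ∈ Tfin) (hu : u ∈ Tfin) : s ++ u ∈ Tfin := by
  intro l
  have h₁ := hs l
  have h₂ := hu (l - s.length)
  have h₃ := hs s.length
  rw [List.take_length] at h₃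
  rcases le_total l s.length with hl | hl
  · rwa [List.take_append_of_le_length hl]
  · rw [List.take_append, List.take_of_length_le hl, List.count_append, List.count_append]
    omega

/-- A `2` erases the last `1`, so `p` is untouched while `q` and the letters appended so far
still contain a `1`. -/
lemma foldl_eraseStep_append (p : List Bool) {q : List Bool} {u : List (Fin 3)}
    (hu : ∀ l, (u.take l).count 2 ≤ (u.take l).count 1 + q.count true) :
    u.foldl eraseStep (p ++ q) = p ++ u.foldl eraseStep q := by
  induction u generalizing q with
  | nil => rfl
  | cons a u ih =>
    rcases Fin.eq_zero_or_eq_one_or_eq_two a with rfl | rfl | rfl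
    · simpa [eraseStep] using ih (q := q ++ [false]) fun l => by simpa using hu (l + 1)
    · simpa [eraseStep] using
        ih (q := q ++ [true]) fun l => by simpa [add_assoc, add_comm 1] using hu (l + 1)
    · have hq : true ∈ q := List.count_pos_iff.1 (by simpa using hu 1)
      have hc := count_replaceLastOne hq
      simp only [List.foldl_cons, eraseStep, replaceLastOne_append_of_mem p hq]
      refine ih fun l => ?_
      have := hu (l + 1)
      grind

lemma eraseWord_append (s : List (Fin 3)) {u : List (Fin 3)} (hu : u ∈ Tfin) :
    eraseWord (s ++ u) = eraseWord s ++ eraseWord u := by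
  simpa [eraseWord, List.foldl_append] using
    foldl_eraseStep_append (eraseWord s) (q := []) (u := u) fun l => by simpa using hu l

lemma eraseWord_concat (s : List (Fin 3)) (a : Fin 3) :
    eraseWord (s ++ [a]) = eraseStep (eraseWord s) a := by
  simp [eraseWord]

lemma length_eraseWord (s : List (Fin 3)) : (eraseWord s).length + s.count 2 = s.length := by
  induction s using List.reverseRecOn with
  | nil => rfl
  | append_singleton s a ih =>
    rw [eraseWord_concat]
    rcases Fin.eq_zero_or_eq_one_or_eq_two a with rfl | rfl | rfl <;>
      grind [eraseStep, length_replaceLastOne]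

lemma count_eraseWord {s : List (Fin 3)} (hs : s ∈ Tfin) :
    (eraseWord s).count true + s.count 2 = s.count 1 := by
  induction s using List.reverseRecOn with
  | nil => rfl
  | append_singleton s a ih =>
    have h := ih (by simpa using take_mem_Tfin hs s.length)
    rw [eraseWord_concat]
    rcases Fin.eq_zero_or_eq_one_or_eq_two a with rfl | rfl | rfl
    · grind [eraseStep]
    · grind [eraseStep]
    · have hlast := hs (s.length + 1)
      rw [List.take_of_length_le (by simp)] at hlast
      have := count_replaceLastOne (List.count_pos_iff.1 (by grind) : true ∈ eraseWord s)
      grind [eraseStep]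

section InfiniteWords

variable {β : Type*}

@[simp]
lemma length_wordPrefix (x : ℕ → β) (n : ℕ) : (wordPrefix x n).length = n := by
  simp [wordPrefix]

@[simp]
lemma getElem_wordPrefix (x : ℕ → β) (n i : ℕ) (h : i < (wordPrefix x n).length) :
    (wordPrefix x n)[i] = x i := by
  simp [wordPrefix]

lemma wordPrefix_one (x : ℕ → β) : wordPrefix x 1 = [x 0] := rfl

lemma take_wordPrefix (x : ℕ → β) (m n : ℕ) :
    (wordPrefix x n).take m = wordPrefix x (min m n) :=
  List.ext_getElem (by simp) fun i _ _ => by simp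

lemma wordPrefix_prefix_wordPrefix (x : ℕ → β) {m n : ℕ} (h : m ≤ n) :
    wordPrefix x m <+: wordPrefix x n := by
  rw [List.prefix_iff_eq_take, length_wordPrefix, take_wordPrefix, min_eq_left h]

lemma wordPrefix_add (x : ℕ → β) {m n : ℕ} (h : m ≤ n) (l : ℕ) :
    wordPrefix x (min (m + l) n) = wordPrefix x m ++ ((wordPrefix x n).drop m).take l := by
  rw [← take_wordPrefix, List.take_add, take_wordPrefix, min_eq_left h]

lemma infPrefix_iff (t : List β) (x : ℕ → β) : InfPrefix t x ↔ t = wordPrefix x t.length := by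
  refine ⟨fun h => List.ext_getElem (by simp) fun i hi _ => by simpa using h ⟨i, hi⟩, fun h i => ?_⟩
  simp [List.getElem_of_eq h]

lemma InfPrefix.prefix_wordPrefix {t : List β} {x : ℕ → β} (h : InfPrefix t x) {n : ℕ}
    (hn : t.length ≤ n) : t <+: wordPrefix x n := by
  rw [(infPrefix_iff t x).1 h]
  exact wordPrefix_prefix_wordPrefix x hn

lemma InfPrefix.of_prefix {s t : List β} {x : ℕ → β} (h : InfPrefix t x) (hst : s <+: t) :
    InfPrefix s x := fun ⟨i, hi⟩ => by
  simpa [hst.getElem hi] using h ⟨i, hi.trans_le hst.length_le⟩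

lemma InfPrefix.prefix_or_prefix {s t : List β} {x : ℕ → β} (hs : InfPrefix s x)
    (ht : InfPrefix t x) : s <+: t ∨ t <+: s :=
  List.prefix_or_prefix_of_prefix (hs.prefix_wordPrefix (le_max_left _ t.length))
    (ht.prefix_wordPrefix (le_max_right s.length _))

end InfiniteWords

/-- The second half of `IsLimitOf` is automatic: two prefixes of `s m` of the same length
coincide. -/
lemma isLimitOf_iff {x : ℕ → Bool} {s : ℕ → List Bool} :
    IsLimitOf x s ↔ ∀ n, ∀ᶠ m in Filter.atTop, wordPrefix x n <+: s m := by
  refine ⟨fun h n => (h _).1 ((infPrefix_iff _ x).2 (by simp)),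
    fun h t => ⟨fun ht => ?_, fun ht => ?_⟩⟩
  · rw [(infPrefix_iff t x).1 ht]
    exact h _
  · obtain ⟨m, hxm, htm⟩ := ((h t.length).and ht).exists
    rw [infPrefix_iff]
    exact List.prefix_of_prefix_length_le htm hxm (by simp) |>.eq_of_length (by simp)

lemma IsLimitOf.unique {x y : ℕ → Bool} {s : ℕ → List Bool} (hx : IsLimitOf x s)
    (hy : IsLimitOf y s) : x = y := by
  funext n
  have h := (hy _).2 ((hx _).1 ((infPrefix_iff (wordPrefix x (n + 1)) x).2 (by simp)))
  simpa using h ⟨n, by simp⟩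

lemma eMap_eq_oneZeros_iff (α : ℕ → Fin 3) :
    eMap α = oneZeros ↔ IsLimitOf oneZeros (fun m => eraseWord (wordPrefix α m)) := by
  unfold eMap
  split_ifs with h
  · exact ⟨fun he => he ▸ h.choose_spec, h.choose_spec.unique⟩
  · exact ⟨fun he => absurd (congrFun he 0) (by simp [oneZeros]), fun hl => absurd ⟨_, hl⟩ h⟩

lemma wordPrefix_oneZeros (n : ℕ) : wordPrefix oneZeros (n + 1) = true :: List.replicate n false :=
  List.ext_getElem (by simp) fun i _ _ => by
    cases i <;> simp [oneZeros, List.getElem_replicate]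

lemma mem_Tinf_iff (α : ℕ → Fin 3) : α ∈ Tinf ↔ ∀ n, wordPrefix α n ∈ Tfin :=
  ⟨fun h n l => by rw [take_wordPrefix]; exact h _,
    fun h n => by simpa [take_wordPrefix] using h n n⟩

lemma mem_preimTenZeros_iff (α : ℕ → Fin 3) :
    α ∈ preimTenZeros ↔ α ∈ Tinf ∧
      ∀ n, ∀ᶠ m in Filter.atTop, true :: List.replicate n false <+: eraseWord (wordPrefix α m) := by
  rw [preimTenZeros, Set.mem_ofPred_eq, eMap_eq_oneZeros_iff, isLimitOf_iff]
  refine and_congr_right fun _ => ⟨fun h n => by simpa [wordPrefix_oneZeros] using h (n + 1),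
    fun h n => ?_⟩
  cases n with
  | zero => exact Filter.Eventually.of_forall fun m => List.nil_prefix
  | succ n => simpa [wordPrefix_oneZeros] using h n

/-- The words of `{0} ∪ E`, described through letter counts instead of the erasing operation. -/
def IsBlock (s : List (Fin 3)) : Prop :=
  s ≠ [] ∧ s.count 1 = s.count 2 ∧
    ∀ l, 0 < l → l < s.length → (s.take l).count 2 < (s.take l).count 1

abbrev Block := {s : List (Fin 3) // IsBlock s}

namespace IsBlock

variable {s t : List (Fin 3)}

lemma mem_Tfin (hs : IsBlock s) : s ∈ Tfin := by
  intro l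
  rcases Nat.eq_zero_or_pos l with rfl | hl
  · simp
  rcases lt_or_ge l s.length with hls | hls
  · exact (hs.2.2 l hl hls).le
  · rw [List.take_of_length_le hls, hs.2.1]

lemma eq_of_prefix (hs : IsBlock s) (ht : IsBlock t) (h : s <+: t) : s = t := by
  refine h.eq_of_length (h.length_le.antisymm (not_lt.1 fun hlt => ?_))
  have := ht.2.2 s.length (List.length_pos_iff.2 hs.1) hlt
  rw [← List.prefix_iff_eq_take.1 h, hs.2.1] at this
  exact lt_irrefl _ this

lemma eraseWord_eq_replicate (hs : IsBlock s) :
    ∃ k, 0 < k ∧ eraseWord s = List.replicate k false := by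
  have hcount := count_eraseWord hs.mem_Tfin
  have hlen := length_eraseWord s
  have hle := count_one_add_count_two_le s
  have hpos := List.length_pos_iff.2 hs.1
  have hbal := hs.2.1
  refine ⟨_, by omega, List.eq_replicate_iff.2 ⟨rfl, fun b hb => ?_⟩⟩
  cases b
  · rfl
  · exact absurd (List.count_pos_iff.2 hb) (by omega)

end IsBlock

lemma isBlock_one_zeros_two (n : ℕ) : IsBlock (1 :: (List.replicate n 0 ++ [2])) := by
  refine ⟨by simp, by simp [List.count_replicate], fun l hl hln => ?_⟩
  obtain ⟨k, rfl⟩ := Nat.exists_eq_add_of_lt hl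
  simp only [zero_add, List.take_succ_cons]
  rw [List.take_append_of_le_length (by grind), List.take_replicate]
  simp [List.count_replicate]

instance : Infinite Block :=
  Infinite.of_injective (fun n => ⟨_, isBlock_one_zeros_two n⟩) fun m n h => by
    simpa using congrArg (fun s : Block => s.val.length) h

/-- `concatPrefix γ n = 1⌢γ₀⌢⋯⌢γₙ₋₁`. -/
def concatPrefix (γ : ℕ → Block) : ℕ → List (Fin 3)
  | 0 => [1]
  | n + 1 => concatPrefix γ n ++ (γ n).val

/-- `concatBlocks γ = 1⌢γ₀⌢γ₁⌢⋯`; the default value of `getD` is never used, since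
`concatPrefix γ (m + 1)` is longer than `m`. -/
def concatBlocks (γ : ℕ → Block) (m : ℕ) : Fin 3 := (concatPrefix γ (m + 1)).getD m 0

section Concat

variable (γ : ℕ → Block)

lemma concatPrefix_congr {γ'} {n : ℕ} (h : ∀ i < n, γ' i = γ i) :
    concatPrefix γ' n = concatPrefix γ n := by
  induction n with
  | zero => rfl
  | succ n ih => simp only [concatPrefix, ih fun i hi => h i (by omega), h n n.lt_succ_self]

lemma lt_length_concatPrefix (n : ℕ) : n < (concatPrefix γ n).length := by
  induction n with
  | zero => simp [concatPrefix]
  | succ n ih =>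
    have := List.length_pos_iff.2 (γ n).2.1
    simp only [concatPrefix, List.length_append]
    omega

lemma concatPrefix_mem_Tfin (n : ℕ) : concatPrefix γ n ∈ Tfin := by
  induction n with
  | zero => intro l; cases l <;> simp [concatPrefix]
  | succ n ih => exact append_mem_Tfin ih (γ n).2.mem_Tfin

lemma exists_concatPrefix_eq_append {m n : ℕ} (h : m ≤ n) :
    ∃ v ∈ Tfin, concatPrefix γ n = concatPrefix γ m ++ v := by
  induction n, h using Nat.le_induction with
  | base => exact ⟨[], by simp [Tfin], by simp⟩
  | succ n _ ih =>
    obtain ⟨v, hv, hn⟩ := ih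
    exact ⟨v ++ (γ n).val, append_mem_Tfin hv (γ n).2.mem_Tfin, by simp [concatPrefix, hn]⟩

lemma infPrefix_concatPrefix (n : ℕ) : InfPrefix (concatPrefix γ n) (concatBlocks γ) := by
  intro ⟨i, hi⟩
  obtain ⟨v, -, hv⟩ := exists_concatPrefix_eq_append γ (le_max_left n (i + 1))
  obtain ⟨w, -, hw⟩ := exists_concatPrefix_eq_append γ (le_max_right n (i + 1))
  have hi' : i < (concatPrefix γ (i + 1)).length :=
    (lt_length_concatPrefix γ (i + 1)).trans' (by omega)
  simp only [List.get_eq_getElem, concatBlocks, List.getD_eq_getElem _ _ hi']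
  rw [List.IsPrefix.getElem ⟨v, hv.symm⟩ hi, List.IsPrefix.getElem ⟨w, hw.symm⟩ hi']

lemma wordPrefix_concatBlocks (l : ℕ) :
    wordPrefix (concatBlocks γ) l = (concatPrefix γ l).take l := by
  rw [(infPrefix_iff _ _).1 (infPrefix_concatPrefix γ l), take_wordPrefix,
    min_eq_left (lt_length_concatPrefix γ l).le]

lemma concatBlocks_mem_Tinf : concatBlocks γ ∈ Tinf := fun l => by
  simpa [wordPrefix_concatBlocks] using concatPrefix_mem_Tfin γ l l

lemma eraseWord_concatPrefix (n : ℕ) :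
    ∃ k, n ≤ k ∧ eraseWord (concatPrefix γ n) = true :: List.replicate k false := by
  induction n with
  | zero => exact ⟨0, le_rfl, rfl⟩
  | succ n ih =>
    obtain ⟨k, hk, hn⟩ := ih
    obtain ⟨k', hk', hγ⟩ := (γ n).2.eraseWord_eq_replicate
    refine ⟨k + k', by omega, ?_⟩
    rw [concatPrefix, eraseWord_append _ (γ n).2.mem_Tfin, hn, hγ]
    simp

lemma concatBlocks_mem_preimTenZeros : concatBlocks γ ∈ preimTenZeros := by
  refine (mem_preimTenZeros_iff _).2 ⟨concatBlocks_mem_Tinf γ, fun n => ?_⟩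
  obtain ⟨k, hk, hn⟩ := eraseWord_concatPrefix γ n
  refine Filter.eventually_atTop.2 ⟨(concatPrefix γ n).length, fun m hm => ?_⟩
  obtain ⟨v, hv, hnm⟩ := exists_concatPrefix_eq_append γ
    ((lt_length_concatPrefix γ n).le.trans hm : n ≤ m)
  rw [wordPrefix_concatBlocks, hnm, List.take_append, List.take_of_length_le hm,
    eraseWord_append _ (take_mem_Tfin hv _), hn]
  exact ((List.prefix_cons_inj true).2 (List.prefix_replicate_iff.2 ⟨by simpa, by simp⟩)).trans
    (List.prefix_append _ _)

/-- Blocks form a prefix code (`IsBlock.eq_of_prefix`). -/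
lemma eq_of_infPrefix_concatPrefix {γ'} {n : ℕ}
    (h : InfPrefix (concatPrefix γ n) (concatBlocks γ')) : ∀ i < n, γ' i = γ i := by
  induction n with
  | zero => simp
  | succ n ih =>
    have hpre : ∀ i < n, γ' i = γ i := ih (h.of_prefix (List.prefix_append _ _))
    have hn : γ' n = γ n := by
      have h' := infPrefix_concatPrefix γ' (n + 1)
      rw [concatPrefix, concatPrefix_congr γ hpre] at h'
      rw [concatPrefix] at h
      refine Subtype.ext ?_
      rcases h'.prefix_or_prefix h with hp | hp
      · exact (γ' n).2.eq_of_prefix (γ n).2 ((List.prefix_append_right_inj _).1 hp)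
      · exact ((γ n).2.eq_of_prefix (γ' n).2 ((List.prefix_append_right_inj _).1 hp)).symm
    intro i hi
    rcases Nat.lt_succ_iff_lt_or_eq.1 hi with hi | rfl
    exacts [hpre i hi, hn]

end Concat

lemma concatBlocks_injective : Function.Injective concatBlocks := fun γ _ h =>
  funext fun i => (eq_of_infPrefix_concatPrefix γ (n := i + 1)
    (h ▸ infPrefix_concatPrefix γ (i + 1)) i i.lt_succ_self).symm

section Decomposition

variable {α : ℕ → Fin 3}

/-- The erased word contains as many `1`s as the excess of `1`s over `2`s read so far
(`count_eraseWord`), and a `2` erases the last of them. -/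
lemma prefix_eraseWord_of_count_le (hα : α ∈ Tinf) {k m : ℕ} (hkm : k ≤ m) {p q : List Bool}
    (hpq : eraseWord (wordPrefix α k) = p ++ q)
    (hh : ∀ j, k ≤ j → j ≤ m → p.count true + (wordPrefix α j).count 2 ≤ (wordPrefix α j).count 1) :
    p <+: eraseWord (wordPrefix α m) := by
  have hk := count_eraseWord ((mem_Tinf_iff α).1 hα k)
  rw [hpq, List.count_append] at hk
  have hsplit : eraseWord (wordPrefix α m) =
      ((wordPrefix α m).drop k).foldl eraseStep (eraseWord (wordPrefix α k)) := by
    conv_lhs => rw [← List.take_append_drop k (wordPrefix α m)]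
    rw [eraseWord, List.foldl_append, take_wordPrefix, min_eq_left hkm]
    rfl
  rw [hsplit, hpq, foldl_eraseStep_append p fun l => ?_]
  · exact List.prefix_append _ _
  have hj := wordPrefix_add α hkm l
  have h1 := congrArg (List.count 1) hj
  have h2 := congrArg (List.count 2) hj
  rw [List.count_append] at h1 h2
  have := hh (min (k + l) m) (by omega) (by omega)
  omega

variable (hα : α ∈ preimTenZeros)
include hα

/-- If the excess vanished at `m`, the erased word, which then has no `1`, would be a prefix of all
later erased words; but these eventually begin with `1`. -/
lemma count_two_lt_count_one {m : ℕ} (hm : 1 ≤ m) :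
    (wordPrefix α m).count 2 < (wordPrefix α m).count 1 := by
  obtain ⟨hT, hlim⟩ := (mem_preimTenZeros_iff α).1 hα
  have hTm := (mem_Tinf_iff α).1 hT m
  by_contra hlt
  have hcount := count_eraseWord hTm
  have hzero : (eraseWord (wordPrefix α m)).count true = 0 := by have := hT m; omega
  have hne : 0 < (eraseWord (wordPrefix α m)).length := by
    have h₁ := length_eraseWord (wordPrefix α m)
    have h₂ := count_one_add_count_two_le (wordPrefix α m)
    rw [length_wordPrefix] at h₁ h₂
    omega
  obtain ⟨m', hone, hm'⟩ := ((hlim 0).and (Filter.eventually_ge_atTop m)).exists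
  have hpre := prefix_eraseWord_of_count_le hT hm' (List.append_nil _).symm fun j _ _ => by
    simpa [hzero] using hT j
  have htrue : [true] <+: eraseWord (wordPrefix α m) :=
    List.prefix_of_prefix_length_le (by simpa using hone) hpre hne
  exact absurd (List.count_pos_iff.2 (htrue.subset (List.mem_singleton_self _))) (by omega)

lemma apply_zero_eq_one : α 0 = 1 := by
  have := count_two_lt_count_one hα le_rfl
  rw [wordPrefix_one] at this
  rcases Fin.eq_zero_or_eq_one_or_eq_two (α 0) with h | h | h <;> simp_all

/-- A `1` that lies after the first `1` of the erased word is eventually erased, so the count of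
`1`s over `2`s keeps coming back down to `1`. -/
lemma exists_count_one_eq_count_two_add_one (N : ℕ) :
    ∃ m, N < m ∧ (wordPrefix α m).count 1 = (wordPrefix α m).count 2 + 1 := by
  obtain ⟨hT, hlim⟩ := (mem_preimTenZeros_iff α).1 hα
  by_contra! hno
  have htwo : ∀ j, N < j → 2 + (wordPrefix α j).count 2 ≤ (wordPrefix α j).count 1 := fun j hj => by
    have := count_two_lt_count_one hα (m := j) (by omega)
    have := hno j hj
    omega
  have hN := count_eraseWord ((mem_Tinf_iff α).1 hT (N + 1))
  obtain ⟨n, hn⟩ := exists_take_count_eq true (eraseWord (wordPrefix α (N + 1))) (c := 2)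
    (by have := htwo (N + 1) (by omega); omega)
  obtain ⟨m, hlimm, hm⟩ := ((hlim n).and (Filter.eventually_ge_atTop (N + 1))).exists
  have hpre := prefix_eraseWord_of_count_le hT hm (List.take_append_drop n _).symm fun j hj _ => by
    rw [hn]; exact htwo j (by omega)
  have := (List.prefix_of_prefix_length_le hpre hlimm (by simp)).sublist.count_le true
  have hone : (true :: List.replicate n false).count true = 1 := by simp [List.count_replicate]
  omega

lemma isBlock_drop_wordPrefix {a b : ℕ} (hab : a < b)
    (ha : (wordPrefix α a).count 1 = (wordPrefix α a).count 2 + 1)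
    (hb : (wordPrefix α b).count 1 = (wordPrefix α b).count 2 + 1)
    (hmid : ∀ j, a < j → j < b → (wordPrefix α j).count 1 ≠ (wordPrefix α j).count 2 + 1) :
    IsBlock ((wordPrefix α b).drop a) := by
  have hlen : ((wordPrefix α b).drop a).length = b - a := by simp
  have hcount : ∀ c : Fin 3, ∀ l ≤ b - a, (wordPrefix α (a + l)).count c =
      (wordPrefix α a).count c + (((wordPrefix α b).drop a).take l).count c := fun c l hl => by
    rw [← List.count_append, ← wordPrefix_add α hab.le, min_eq_left (by omega)]
  refine ⟨List.ne_nil_of_length_pos (by omega), ?_, fun l hl hlb => ?_⟩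
  · have h1 := hcount 1 (b - a) le_rfl
    have h2 := hcount 2 (b - a) le_rfl
    rw [List.take_of_length_le hlen.le, Nat.add_sub_cancel' hab.le] at h1 h2
    omega
  · have := count_two_lt_count_one hα (m := a + l) (by omega)
    have := hmid (a + l) (by omega) (by omega)
    have h1 := hcount 1 l (by omega)
    have h2 := hcount 2 l (by omega)
    omega

/-- The return times `1 = r₀ < r₁ < ⋯`: the lengths of the prefixes with one more `1` than `2`s.
The `n`-th block of `α` is the factor between `rₙ` and `rₙ₊₁`. -/
noncomputable def returnTime (α : ℕ → Fin 3) : ℕ → ℕ :=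
  Nat.nth fun m => (wordPrefix α m).count 1 = (wordPrefix α m).count 2 + 1

lemma infinite_setOf_returnTime :
    {m | (wordPrefix α m).count 1 = (wordPrefix α m).count 2 + 1}.Infinite :=
  Set.infinite_of_forall_exists_gt fun N =>
    (exists_count_one_eq_count_two_add_one hα N).imp fun _ h => ⟨h.2, h.1⟩

lemma returnTime_strictMono : StrictMono (returnTime α) :=
  Nat.nth_strictMono (infinite_setOf_returnTime hα)

lemma count_wordPrefix_returnTime (n : ℕ) :
    (wordPrefix α (returnTime α n)).count 1 = (wordPrefix α (returnTime α n)).count 2 + 1 :=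
  Nat.nth_mem_of_infinite (infinite_setOf_returnTime hα) n

lemma returnTime_zero : returnTime α 0 = 1 := by
  have h1 : (wordPrefix α 1).count 1 = (wordPrefix α 1).count 2 + 1 := by
    simp [wordPrefix_one, apply_zero_eq_one hα]
  have h0 : Nat.count (fun m => (wordPrefix α m).count 1 = (wordPrefix α m).count 2 + 1) 1 = 0 := by
    rw [Nat.count_succ, Nat.count_zero, if_neg (by simp [wordPrefix])]
  rw [← h0]
  exact Nat.nth_count h1

noncomputable def blockOf (n : ℕ) : Block :=
  ⟨(wordPrefix α (returnTime α (n + 1))).drop (returnTime α n),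
    isBlock_drop_wordPrefix hα (returnTime_strictMono hα n.lt_succ_self)
      (count_wordPrefix_returnTime hα n) (count_wordPrefix_returnTime hα (n + 1))
      fun _ hj hj' h => (Nat.le_nth_of_lt_nth_succ
        (p := fun m => (wordPrefix α m).count 1 = (wordPrefix α m).count 2 + 1) hj' h).not_gt hj⟩

lemma concatPrefix_blockOf (n : ℕ) :
    concatPrefix (blockOf hα) n = wordPrefix α (returnTime α n) := by
  induction n with
  | zero => simp [concatPrefix, returnTime_zero hα, wordPrefix_one, apply_zero_eq_one hα]
  | succ n ih =>
    have h := List.take_append_drop (returnTime α n) (wordPrefix α (returnTime α (n + 1)))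
    rw [take_wordPrefix, min_eq_left (returnTime_strictMono hα n.lt_succ_self).le] at h
    rw [concatPrefix, ih]
    exact h

lemma concatBlocks_blockOf : concatBlocks (blockOf hα) = α := by
  funext m
  have hm : m < returnTime α (m + 1) := (returnTime_strictMono hα).id_le (m + 1)
  rw [concatBlocks, concatPrefix_blockOf, List.getD_eq_getElem _ _ (by simpa using hm),
    getElem_wordPrefix]

end Decomposition

lemma continuous_of_forall_cylinder {Y E X : Type*} [TopologicalSpace Y] [TopologicalSpace E]
    [DiscreteTopology E] [TopologicalSpace X] [DiscreteTopology X] {φ : Y → ℕ → E}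
    (hφ : Continuous φ) {f : Y → ℕ → X}
    (hf : ∀ y n, ∃ L, ∀ y', φ y' ∈ PiNat.cylinder (φ y) L → f y' n = f y n) : Continuous f := by
  refine continuous_pi fun n => IsLocallyConstant.continuous ?_
  rw [IsLocallyConstant.iff_eventually_eq]
  intro y
  obtain ⟨L, hL⟩ := hf y n
  filter_upwards [hφ.continuousAt.preimage_mem_nhds
    ((PiNat.isOpen_cylinder (fun _ => E) (φ y) L).mem_nhds (PiNat.self_mem_cylinder (φ y) L))]
    with y' hy' using hL y' hy'

noncomputable def concatBlocksEquiv : (ℕ → Block) ≃ preimTenZeros :=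
  Equiv.ofBijective (fun γ => ⟨concatBlocks γ, concatBlocks_mem_preimTenZeros γ⟩)
    ⟨fun _ _ h => concatBlocks_injective (congrArg Subtype.val h),
      fun α => ⟨blockOf α.2, Subtype.ext (concatBlocks_blockOf α.2)⟩⟩

noncomputable def concatBlocksHomeomorph : (ℕ → Block) ≃ₜ preimTenZeros where
  toEquiv := concatBlocksEquiv
  continuous_toFun := by
    refine Continuous.subtype_mk (continuous_of_forall_cylinder continuous_id fun γ m => ?_) _
    exact ⟨m + 1, fun γ' h => by
      rw [concatBlocks, concatBlocks, concatPrefix_congr (γ' := γ') γ fun i hi => h i hi]⟩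
  continuous_invFun := by
    refine continuous_of_forall_cylinder continuous_subtype_val fun α n => ?_
    set γ := concatBlocksEquiv.symm α
    have hα : concatBlocks γ = α.val := congrArg Subtype.val (concatBlocksEquiv.apply_symm_apply α)
    refine ⟨(concatPrefix γ (n + 1)).length, fun β hβ => ?_⟩
    have hβ' : concatBlocks (concatBlocksEquiv.symm β) = β.val :=
      congrArg Subtype.val (concatBlocksEquiv.apply_symm_apply β)
    refine eq_of_infPrefix_concatPrefix (γ' := concatBlocksEquiv.symm β) γ (fun i => ?_) n
      n.lt_succ_self
    rw [hβ', hβ i i.2, ← hα]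
    exact infPrefix_concatPrefix γ (n + 1) i

theorem not_sigmaCompactSpace_nat_to_nat : ¬ SigmaCompactSpace (ℕ → ℕ) := by
  intro h
  obtain ⟨K, hK, hcover⟩ := h.exists_compact_covering
  choose b hb using fun n => ((hK n).image (continuous_apply n)).bddAbove
  obtain ⟨n, hn⟩ := Set.mem_iUnion.1 (hcover ▸ Set.mem_univ fun n => b n + 1)
  exact (b n).not_succ_le_self (hb n ⟨_, hn, rfl⟩)

/-- `e^{-1}({10^ω})` is homeomorphic to the Baire space `ℕ^ℕ`; consequently it is not a
countable union of compact subsets of `3^ω`. -/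
theorem preimTenZeros_homeomorph_baire :
    Nonempty ((ℕ → ℕ) ≃ₜ preimTenZeros) ∧
      ¬ ∃ K : ℕ → Set (ℕ → Fin 3), (∀ n, IsCompact (K n)) ∧ preimTenZeros = ⋃ n, K n := by
  obtain ⟨_⟩ := nonempty_denumerable Block
  let e : (ℕ → ℕ) ≃ₜ preimTenZeros :=
    (Homeomorph.piCongrRight fun _ => Homeomorph.ofDiscrete (Denumerable.eqv Block).symm).trans
      concatBlocksHomeomorph
  refine ⟨⟨e⟩, fun ⟨K, hK, hU⟩ => not_sigmaCompactSpace_nat_to_nat ?_⟩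
  have hσ : IsSigmaCompact (Set.univ : Set preimTenZeros) :=
    isSigmaCompact_iff_isSigmaCompact_univ.1 ⟨K, hK, hU.symm⟩
  rw [← isSigmaCompact_univ_iff]
  simpa using hσ.image e.symm.continuous
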